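/- arXiv:1107.4130 — 2 statements merged into one kernel-verified Lean document; each statement's English description precedes it below -/
import Mathlib

section
/- Let τ ∈ K̄. If p ≡ 1 (mod 4), then −1 ∈ R and τ maps R onto R and N onto N. If p ≡ 3 (mod 4), then −1 ∈ N and τ maps R onto N and N onto R. -/
instance (X : Type*) [DecidableEq X] : DecidableEq (OnePoint X) :=
  inferInstanceAs (DecidableEq (Option X))

/-- The translation `z ↦ z + a` on `ℤ/p ∪ {∞}`, fixing `∞`. -/
def ptrans (p : ℕ) (a : ZMod p) : Equiv.Perm (OnePoint (ZMod p)) :=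
  Equiv.optionCongr (Equiv.addRight a)

/-- The map `z ↦ a z` on `ℤ/p ∪ {∞}`, fixing `∞`, for `a ≠ 0`. -/
def pmul (p : ℕ) [Fact p.Prime] (a : ZMod p) (ha : a ≠ 0) : Equiv.Perm (OnePoint (ZMod p)) :=
  Equiv.optionCongr (Equiv.mulLeft₀ a ha)

/-- Multiplication by `a` extended to `ℤ/p ∪ {∞}` (with `a·∞ = ∞`). -/
def opSmul (p : ℕ) (a : ZMod p) : OnePoint (ZMod p) → OnePoint (ZMod p) :=
  fun x => Option.map (fun z => a * z) x

/-- Underlying function of the map `z ↦ -1/z`. -/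
def negInvFun (p : ℕ) : OnePoint (ZMod p) → OnePoint (ZMod p)
  | Option.none => Option.some (0 : ZMod p)
  | Option.some z => if z = 0 then Option.none else Option.some (-z⁻¹ : ZMod p)

/-- The permutation `z ↦ -1/z` of `ℤ/p ∪ {∞}` (sending `0 ↦ ∞` and `∞ ↦ 0`). -/
def negInvPerm (p : ℕ) [Fact p.Prime] : Equiv.Perm (OnePoint (ZMod p)) :=
  Function.Involutive.toPerm (negInvFun p) (by
    intro x
    match x with
    | Option.none => simp [negInvFun] <;> rfl
    | Option.some z =>
      by_cases hz : z = 0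
      · simp [negInvFun, hz] <;> rfl
      · have h1 : (-z⁻¹ : ZMod p) ≠ 0 := by simp [hz]
        (simp [negInvFun, hz, h1, inv_neg, inv_inv] <;> rfl))

/-- The involution `(0 ∞)(1 3)(2 6)(4 5)`. -/
def inv1 (p : ℕ) : Equiv.Perm (OnePoint (ZMod p)) :=
  Equiv.swap ((0 : ZMod p) : OnePoint (ZMod p)) OnePoint.infty *
  Equiv.swap ((1 : ZMod p) : OnePoint (ZMod p)) ((3 : ZMod p) : OnePoint (ZMod p)) *
  Equiv.swap ((2 : ZMod p) : OnePoint (ZMod p)) ((6 : ZMod p) : OnePoint (ZMod p)) *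
  Equiv.swap ((4 : ZMod p) : OnePoint (ZMod p)) ((5 : ZMod p) : OnePoint (ZMod p))

/-- The involution `(0 ∞)(1 5)(2 3)(4 6)`. -/
def inv2 (p : ℕ) : Equiv.Perm (OnePoint (ZMod p)) :=
  Equiv.swap ((0 : ZMod p) : OnePoint (ZMod p)) OnePoint.infty *
  Equiv.swap ((1 : ZMod p) : OnePoint (ZMod p)) ((5 : ZMod p) : OnePoint (ZMod p)) *
  Equiv.swap ((2 : ZMod p) : OnePoint (ZMod p)) ((3 : ZMod p) : OnePoint (ZMod p)) *
  Equiv.swap ((4 : ZMod p) : OnePoint (ZMod p)) ((6 : ZMod p) : OnePoint (ZMod p))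

/-- The set of nonzero squares in `ℤ/p`. -/
def Rset (p : ℕ) : Set (ZMod p) := {a | a ≠ 0 ∧ IsSquare a}

/-- The set of nonsquares in `(ℤ/p)*`. -/
def Nset (p : ℕ) : Set (ZMod p) := {a | a ≠ 0 ∧ ¬ IsSquare a}


/-!
The stabilizer `H` of `∞` in `G` has order `p (p - 1) / 2`, so the translations form its normal
Sylow `p`-subgroup and every element of `H` is affine, `z ↦ c z + d`. Comparing orders, the
admissible slopes `c` form a subgroup of index two of `(ℤ/p)ˣ`, i.e. the squares. Conjugating a
square dilation by `τ` gives a square dilation (it fixes `0` and `∞`), so `χ ∘ τ` is constant on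
square classes; as `τ` permutes `(ℤ/p)ˣ`, `χ (τ z) = ε χ z` for a sign `ε`. Finally
`τ⁻¹ ∘ (· - u) ∘ τ ∘ (· + 1) ∘ τ`, with `u = τ 1`, fixes `∞`; evaluating its affine form at `0` and
at its zero gives `ε = χ (-1)`, and `χ (-1) = 1` exactly when `p ≡ 1 (mod 4)`.
-/

open Equiv MulAction Subgroup

theorem Subgroup.card_inf_stabilizer_mul_card {Γ X : Type*} [Group Γ] [MulAction Γ X]
    (G : Subgroup Γ) [IsPretransitive G X] (x : X) :
    Nat.card (G ⊓ stabilizer Γ x : Subgroup Γ) * Nat.card X = Nat.card G := by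
  have hstab : stabilizer G x = (G ⊓ stabilizer Γ x).subgroupOf G := by
    rw [inf_subgroupOf_left]; rfl
  rw [← index_stabilizer_of_transitive G x, mul_comm, ← (stabilizer G x).index_mul_card, hstab,
    Nat.card_congr (subgroupOfEquivOfLe inf_le_left).toEquiv]

theorem Subgroup.le_normalizer_of_card_eq_prime {Γ : Type*} [Group Γ] {p m : ℕ} [Fact p.Prime]
    {H P : Subgroup Γ} [Finite H] (hPH : P ≤ H) (hP : Nat.card P = p) (hH : Nat.card H = p * m)
    (hm : m < p) : H ≤ normalizer (P : Set Γ) := by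
  have hcardQ : Nat.card (P.subgroupOf H) = p := by
    rw [Nat.card_congr (subgroupOfEquivOfLe hPH).toEquiv, hP]
  have hindex : (P.subgroupOf H).index = m := by
    have := (P.subgroupOf H).card_mul_index
    rw [hcardQ, hH] at this
    exact Nat.eq_of_mul_eq_mul_left (Fact.out : p.Prime).pos this
  have hm0 : 0 < m :=
    Nat.pos_of_ne_zero (by rintro rfl; exact Nat.card_pos.ne' (by simpa using hH))
  let Q : Sylow p H := (IsPGroup.of_card (n := 1) (by rw [hcardQ, pow_one])).toSylow
    (by rw [hindex]; exact Nat.not_dvd_of_pos_of_lt hm0 hm)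
  have hunique : Nat.card (Sylow p H) = 1 := by
    have hdvd : Nat.card (Sylow p H) ∣ m := hindex ▸ Q.card_dvd_index
    have hmod := card_sylow_modEq_one p H
    rwa [Nat.ModEq, Nat.mod_eq_of_lt ((Nat.le_of_dvd hm0 hdvd).trans_lt hm),
      Nat.mod_eq_of_lt (Fact.out : p.Prime).one_lt] at hmod
  have : Subsingleton (Sylow p H) := (Nat.card_eq_one_iff_unique.mp hunique).1
  exact (normal_subgroupOf_iff_le_normalizer hPH).mp (Sylow.normal_of_subsingleton Q)

theorem Subgroup.mem_iff_isSquare_of_index_eq_two {F : Type*} [Field F] [Fintype F]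
    [DecidableEq F] {W : Subgroup Fˣ} (hW : W.index = 2) (c : Fˣ) : c ∈ W ↔ IsSquare (c : F) := by
  have mem_of_isSquare : ∀ c : Fˣ, IsSquare (c : F) → c ∈ W := by
    rintro c ⟨y, hy⟩
    have hy0 : y ≠ 0 := by rintro rfl; simp at hy
    convert sq_mem_of_index_two hW (Units.mk0 y hy0)
    ext; simp [hy, sq]
  refine ⟨fun hc => ?_, mem_of_isSquare c⟩
  by_contra hcns
  obtain ⟨x, hx⟩ : ∃ x, x ∉ W := by
    by_contra! h
    rw [(eq_top_iff' W).mpr h, index_top] at hW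
    exact absurd hW (by norm_num)
  have hxns : ¬IsSquare (x : F) := fun h => hx (mem_of_isSquare x h)
  -- a product of two nonsquares is a square, but `c * x ∉ W` since exactly one factor is in `W`
  have hcx : c * x ∈ W := by
    apply mem_of_isSquare
    rw [← quadraticChar_one_iff_isSquare (c * x).ne_zero, Units.val_mul, map_mul,
      quadraticChar_neg_one_iff_not_isSquare.mpr hcns,
      quadraticChar_neg_one_iff_not_isSquare.mpr hxns]
    norm_num
  exact hx (((mul_mem_iff_of_index_two hW).mp hcx).mp hc)

theorem apply_eq_mul_quadraticChar_of_invariant {F : Type*} [Field F] [Fintype F]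
    [DecidableEq F] {ψ : F → ℤ} (hψ : ∀ c z, c ≠ 0 → IsSquare c → ψ (c * z) = ψ z)
    (h1 : ψ 1 ≠ 0) {z₀ : F} (hz₀ : z₀ ≠ 0) (hψz₀ : ψ z₀ = -ψ 1) {z : F} (hz : z ≠ 0) :
    ψ z = ψ 1 * quadraticChar F z := by
  have hsq : ∀ z, z ≠ 0 → IsSquare z → ψ z = ψ 1 := fun z hz hzsq => by
    simpa using hψ z 1 hz hzsq
  have hz₀ns : ¬IsSquare z₀ := fun h => h1 (by linarith [hsq z₀ hz₀ h])
  by_cases hzsq : IsSquare z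
  · rw [hsq z hz hzsq, (quadraticChar_one_iff_isSquare hz).mpr hzsq, mul_one]
  · have hzz₀ : IsSquare (z * z₀) := by
      rw [← quadraticChar_one_iff_isSquare (mul_ne_zero hz hz₀), map_mul,
        quadraticChar_neg_one_iff_not_isSquare.mpr hzsq,
        quadraticChar_neg_one_iff_not_isSquare.mpr hz₀ns]
      norm_num
    have hc : IsSquare (z * z₀ * (z₀⁻¹ * z₀⁻¹)) := hzz₀.mul (IsSquare.mul_self _)
    have hcz₀ : z * z₀ * (z₀⁻¹ * z₀⁻¹) * z₀ = z := by field_simp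
    rw [← hcz₀, hψ _ _ (by simp [hz, hz₀]) hc, hψz₀,
      quadraticChar_neg_one_iff_not_isSquare.mpr (hcz₀.symm ▸ hzsq), mul_neg_one]

lemma OnePoint.exists_apply_coe_eq_coe {X : Type*} {g : Perm (OnePoint X)}
    (hg : g OnePoint.infty = OnePoint.infty) (z : X) :
    ∃ w : X, g (OnePoint.some z) = OnePoint.some w :=
  (OnePoint.ne_infty_iff_exists.mp fun h =>
    OnePoint.coe_ne_infty z (g.injective (h.trans hg.symm))).imp fun _ h => h.symm

section Translations

variable (p : ℕ)

@[simp] lemma ptrans_some (a z : ZMod p) :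
    ptrans p a (OnePoint.some z) = OnePoint.some (z + a) :=
  rfl

@[simp] lemma ptrans_infty (a : ZMod p) : ptrans p a OnePoint.infty = OnePoint.infty := rfl

def ptransHom : Multiplicative (ZMod p) →* Perm (OnePoint (ZMod p)) where
  toFun a := ptrans p a.toAdd
  map_one' := by ext x; cases x <;> simp
  map_mul' a b := by ext x; cases x <;> simp [add_left_comm, add_comm]

@[simp] lemma ptransHom_apply (a : Multiplicative (ZMod p)) :
    ptransHom p a = ptrans p a.toAdd :=
  rfl

@[simp] lemma ptrans_zero : ptrans p 0 = 1 := (ptransHom p).map_one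

lemma ptrans_pow (a : ZMod p) (n : ℕ) : ptrans p a ^ n = ptrans p (n * a) := by
  have := (ptransHom p).map_pow (Multiplicative.ofAdd a) n
  rw [← ofAdd_nsmul, ptransHom_apply, ptransHom_apply, toAdd_ofAdd, toAdd_ofAdd,
    nsmul_eq_mul] at this
  exact this.symm

def translations : Subgroup (Perm (OnePoint (ZMod p))) := (ptransHom p).range

lemma ptrans_mem_translations (a : ZMod p) : ptrans p a ∈ translations p :=
  ⟨Multiplicative.ofAdd a, rfl⟩

lemma card_translations [NeZero p] : Nat.card (translations p) = p := by
  have hinj : Function.Injective (ptransHom p) := fun a b hab => by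
    simpa using congrArg (fun g : Perm (OnePoint (ZMod p)) => g (OnePoint.some 0)) hab
  rw [translations, ← Nat.card_congr (MonoidHom.ofInjective hinj).toEquiv,
    Nat.card_eq_fintype_card, Fintype.card_multiplicative, ZMod.card]

end Translations

section Dilations

variable (p : ℕ) [Fact p.Prime]

@[simp] lemma pmul_some (a : ZMod p) (ha : a ≠ 0) (z : ZMod p) :
    pmul p a ha (OnePoint.some z) = OnePoint.some (a * z) :=
  rfl

@[simp] lemma pmul_infty (a : ZMod p) (ha : a ≠ 0) :
    pmul p a ha OnePoint.infty = OnePoint.infty :=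
  rfl

def pmulHom : (ZMod p)ˣ →* Perm (OnePoint (ZMod p)) where
  toFun c := pmul p c c.ne_zero
  map_one' := by ext x; cases x <;> simp
  map_mul' a b := by ext x; cases x <;> simp [mul_assoc]

@[simp] lemma pmulHom_some (c : (ZMod p)ˣ) (z : ZMod p) :
    pmulHom p c (OnePoint.some z) = OnePoint.some (c * z) :=
  rfl

@[simp] lemma pmulHom_infty (c : (ZMod p)ˣ) : pmulHom p c OnePoint.infty = OnePoint.infty := rfl

end Dilations

section Affine

variable {p : ℕ} [Fact p.Prime]

lemma conj_ptrans_eq {k : Perm (OnePoint (ZMod p))} {a : ZMod p}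
    (hk : k * ptrans p 1 * k⁻¹ = ptrans p a) (z : ZMod p) :
    k * ptrans p z * k⁻¹ = ptrans p (z * a) := by
  rw [← ZMod.natCast_zmod_val z, ← mul_one (z.val : ZMod p), ← ptrans_pow, ← conj_pow, hk,
    ptrans_pow, mul_one]

lemma exists_eq_ptrans_mul_pmulHom {g : Perm (OnePoint (ZMod p))}
    (hg : g OnePoint.infty = OnePoint.infty) (hgT : g ∈ normalizer (translations p : Set _)) :
    ∃ (d : ZMod p) (c : (ZMod p)ˣ), g = ptrans p d * pmulHom p c := by
  obtain ⟨a, ha⟩ := (mem_normalizer_iff.mp hgT _).mp (ptrans_mem_translations p 1)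
  obtain ⟨d, hd⟩ := OnePoint.exists_apply_coe_eq_coe hg 0
  have happly : ∀ z, g (OnePoint.some z) = OnePoint.some (z * a.toAdd + d) := fun z => by
    calc g (OnePoint.some z) = (g * ptrans p z * g⁻¹) (g (OnePoint.some 0)) := by simp
      _ = OnePoint.some (z * a.toAdd + d) := by
        rw [conj_ptrans_eq ha.symm, hd, ptrans_some, add_comm]
  have ha0 : a.toAdd ≠ 0 := fun h => one_ne_zero <| OnePoint.coe_injective <|
    g.injective ((happly 1).trans ((happly 0).trans (by simp [h])).symm)
  refine ⟨d, Units.mk0 _ ha0, Equiv.ext fun x => ?_⟩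
  cases x
  · exact hg
  · simp [happly, mul_comm]

end Affine

section Stabilizer

variable {p : ℕ}

def stabInfty (G : Subgroup (Perm (OnePoint (ZMod p)))) : Subgroup (Perm (OnePoint (ZMod p))) :=
  G ⊓ stabilizer _ (OnePoint.infty : OnePoint (ZMod p))

variable {G : Subgroup (Perm (OnePoint (ZMod p)))}

lemma mem_stabInfty {g : Perm (OnePoint (ZMod p))} :
    g ∈ stabInfty G ↔ g ∈ G ∧ g OnePoint.infty = OnePoint.infty :=
  Iff.rfl

lemma translations_le_stabInfty (htransl : ∀ a : ZMod p, ptrans p a ∈ G) :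
    translations p ≤ stabInfty G := by
  rintro _ ⟨a, rfl⟩
  exact mem_stabInfty.mpr ⟨htransl _, rfl⟩

variable [Fact p.Prime]

lemma card_stabInfty (hp2 : p ≠ 2) (htrans : ∀ x y : OnePoint (ZMod p), ∃ g ∈ G, g x = y)
    (hcard : Nat.card G = (p ^ 3 - p) / 2) : Nat.card (stabInfty G) = p * ((p - 1) / 2) := by
  have : IsPretransitive G (OnePoint (ZMod p)) :=
    ⟨fun x y => (htrans x y).elim fun g ⟨hg, hgx⟩ => ⟨⟨g, hg⟩, hgx⟩⟩
  have h := G.card_inf_stabilizer_mul_card (OnePoint.infty : OnePoint (ZMod p))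
  rw [hcard, show Nat.card (OnePoint (ZMod p)) = p + 1 by simp [OnePoint]] at h
  obtain ⟨k, rfl⟩ := (Fact.out : p.Prime).odd_of_ne_two hp2
  have hpoly : (2 * k + 1) ^ 3 - (2 * k + 1) = 2 * ((2 * k + 1) * k * (2 * k + 1 + 1)) :=
    Nat.sub_eq_of_eq_add (by ring)
  rw [hpoly, Nat.mul_div_cancel_left _ two_pos] at h
  rw [show (2 * k + 1 - 1) / 2 = k by omega]
  exact Nat.eq_of_mul_eq_mul_right (Nat.succ_pos _) h

lemma card_stabInfty_eq_mul_card_comap_pmulHom (htransl : ∀ a : ZMod p, ptrans p a ∈ G)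
    (hnorm : stabInfty G ≤ normalizer (translations p : Set _)) :
    Nat.card (stabInfty G) = p * Nat.card (G.comap (pmulHom p)) := by
  let e : ZMod p × G.comap (pmulHom p) → stabInfty G := fun dc =>
    ⟨ptrans p dc.1 * pmulHom p dc.2, mem_stabInfty.mpr ⟨G.mul_mem (htransl _) dc.2.2, rfl⟩⟩
  have he : Function.Bijective e := by
    refine ⟨?_, ?_⟩
    · rintro ⟨d, c⟩ ⟨d', c'⟩ h
      have h0 := congrArg (fun g : stabInfty G => (g : Perm _) (OnePoint.some (0 : ZMod p))) h
      have h1 := congrArg (fun g : stabInfty G => (g : Perm _) (OnePoint.some (1 : ZMod p))) h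
      simp only [e, Perm.mul_apply, pmulHom_some, ptrans_some, mul_zero, zero_add, mul_one,
        OnePoint.coe_eq_coe] at h0 h1
      subst h0
      exact Prod.ext rfl (Subtype.ext (Units.ext (add_right_cancel h1)))
    · rintro ⟨g, hg⟩
      obtain ⟨hgG, hgfix⟩ := mem_stabInfty.mp hg
      obtain ⟨d, c, rfl⟩ := exists_eq_ptrans_mul_pmulHom hgfix (hnorm hg)
      have hc : pmulHom p c ∈ G := by simpa using G.mul_mem (G.inv_mem (htransl d)) hgG
      exact ⟨⟨d, c, hc⟩, rfl⟩
  rw [← Nat.card_congr (Equiv.ofBijective e he), Nat.card_prod, Nat.card_zmod]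

variable (hp2 : p ≠ 2) (htrans : ∀ x y : OnePoint (ZMod p), ∃ g ∈ G, g x = y)
  (hcard : Nat.card G = (p ^ 3 - p) / 2) (htransl : ∀ a : ZMod p, ptrans p a ∈ G)
include hp2 htrans hcard htransl

lemma stabInfty_le_normalizer_translations :
    stabInfty G ≤ normalizer (translations p : Set _) :=
  le_normalizer_of_card_eq_prime (translations_le_stabInfty htransl) (card_translations p)
    (card_stabInfty hp2 htrans hcard) (by have := (Fact.out : p.Prime).pos; omega)

lemma index_comap_pmulHom : (G.comap (pmulHom p)).index = 2 := by
  have hcard' := (card_stabInfty hp2 htrans hcard).symm.trans <|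
    card_stabInfty_eq_mul_card_comap_pmulHom htransl
      (stabInfty_le_normalizer_translations hp2 htrans hcard htransl)
  have h := (G.comap (pmulHom p)).card_mul_index
  rw [← Nat.eq_of_mul_eq_mul_left (Fact.out : p.Prime).pos hcard', Nat.card_units,
    Nat.card_zmod] at h
  obtain ⟨k, rfl⟩ := (Fact.out : p.Prime).odd_of_ne_two hp2
  have hk : 0 < k := by have := (Fact.out : (2 * k + 1).Prime).two_le; omega
  rw [show (2 * k + 1 - 1) / 2 = k by omega] at h
  exact Nat.eq_of_mul_eq_mul_left hk (h.trans (by omega))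

lemma pmulHom_mem_iff (c : (ZMod p)ˣ) : pmulHom p c ∈ G ↔ IsSquare (c : ZMod p) :=
  mem_iff_isSquare_of_index_eq_two (index_comap_pmulHom hp2 htrans hcard htransl) c

lemma exists_eq_ptrans_mul_pmulHom_of_mem_stabInfty {g : Perm (OnePoint (ZMod p))}
    (hg : g ∈ stabInfty G) :
    ∃ (d : ZMod p) (c : (ZMod p)ˣ), IsSquare (c : ZMod p) ∧ g = ptrans p d * pmulHom p c := by
  obtain ⟨hgG, hgfix⟩ := mem_stabInfty.mp hg
  obtain ⟨d, c, rfl⟩ := exists_eq_ptrans_mul_pmulHom hgfix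
    (stabInfty_le_normalizer_translations hp2 htrans hcard htransl hg)
  refine ⟨d, c, (pmulHom_mem_iff hp2 htrans hcard htransl c).mp ?_, rfl⟩
  simpa using G.mul_mem (G.inv_mem (htransl d)) hgG

end Stabilizer

section QuadraticCharacter

variable (p : ℕ) [Fact p.Prime]

def qchar (x : OnePoint (ZMod p)) : ℤ := x.elim 0 (quadraticChar (ZMod p))

@[simp] lemma qchar_infty : qchar p OnePoint.infty = 0 := rfl

@[simp] lemma qchar_some (z : ZMod p) : qchar p (OnePoint.some z) = quadraticChar (ZMod p) z :=
  rfl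

lemma qchar_pmulHom (c : (ZMod p)ˣ) (x : OnePoint (ZMod p)) :
    qchar p (pmulHom p c x) = quadraticChar (ZMod p) c * qchar p x := by
  cases x
  · simp
  · rw [pmulHom_some, qchar_some, qchar_some, map_mul]

lemma image_some_Rset :
    (fun z : ZMod p => OnePoint.some z) '' Rset p = {x | qchar p x = 1} := by
  ext x
  cases x with
  | infty => simp
  | coe z =>
    simp only [Set.mem_image, OnePoint.coe_eq_coe, exists_eq_right, Set.mem_ofPred_eq, qchar_some]
    constructor
    · exact fun ⟨hz, hzsq⟩ => (quadraticChar_one_iff_isSquare hz).mpr hzsq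
    · intro h
      have hz : z ≠ 0 := by rintro rfl; simp at h
      exact ⟨hz, (quadraticChar_one_iff_isSquare hz).mp h⟩

lemma image_some_Nset :
    (fun z : ZMod p => OnePoint.some z) '' Nset p = {x | qchar p x = -1} := by
  ext x
  cases x with
  | infty => simp
  | coe z =>
    simp only [Set.mem_image, OnePoint.coe_eq_coe, exists_eq_right, Set.mem_ofPred_eq, qchar_some,
      quadraticChar_neg_one_iff_not_isSquare]
    exact ⟨And.right, fun h => ⟨by rintro rfl; exact h IsSquare.zero, h⟩⟩

variable {p}

lemma image_setOf_qchar_eq {τ : Perm (OnePoint (ZMod p))} {ε : ℤ} (hε : ε * ε = 1)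
    (hτ : ∀ x, qchar p (τ⁻¹ x) = ε * qchar p x) (s : ℤ) :
    τ '' {x | qchar p x = s} = {x | qchar p x = ε * s} := by
  ext y
  rw [Equiv.image_eq_preimage_symm, Set.mem_preimage, Set.mem_ofPred_eq, Set.mem_ofPred_eq,
    ← Perm.inv_def, hτ]
  constructor
  · rintro rfl; rw [← mul_assoc, hε, one_mul]
  · rintro h; rw [h, ← mul_assoc, hε, one_mul]

end QuadraticCharacter

lemma exists_apply_coe_eq_coe_ne_zero {p : ℕ} {τ : Perm (OnePoint (ZMod p))}
    (hτ0 : τ (OnePoint.some 0) = OnePoint.infty) (hτinf : τ OnePoint.infty = OnePoint.some 0)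
    {z : ZMod p} (hz : z ≠ 0) : ∃ w, w ≠ 0 ∧ τ (OnePoint.some z) = OnePoint.some w := by
  obtain ⟨w, hw⟩ := OnePoint.ne_infty_iff_exists.mp fun h =>
    hz (OnePoint.coe_injective (τ.injective (h.trans hτ0.symm)))
  refine ⟨w, ?_, hw.symm⟩
  rintro rfl
  exact OnePoint.coe_ne_infty z (τ.injective (hw.symm.trans hτinf.symm))

section Swap

variable {p : ℕ} [Fact p.Prime] {G : Subgroup (Perm (OnePoint (ZMod p)))}
  (hp2 : p ≠ 2) (htrans : ∀ x y : OnePoint (ZMod p), ∃ g ∈ G, g x = y)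
  (hcard : Nat.card G = (p ^ 3 - p) / 2) (htransl : ∀ a : ZMod p, ptrans p a ∈ G)
  {τ : Perm (OnePoint (ZMod p))} (hτG : τ ∈ G)
  (hτ0 : τ (OnePoint.some 0) = OnePoint.infty) (hτinf : τ OnePoint.infty = OnePoint.some 0)
include hp2 htrans hcard htransl hτG hτ0 hτinf

lemma qchar_apply_pmulHom_of_isSquare {c : (ZMod p)ˣ} (hc : IsSquare (c : ZMod p))
    (x : OnePoint (ZMod p)) : qchar p (τ (pmulHom p c x)) = qchar p (τ x) := by
  have hτinv0 : τ.symm OnePoint.infty = OnePoint.some 0 := τ.symm_apply_eq.mpr hτ0.symm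
  have hτinvinf : τ.symm (OnePoint.some 0) = OnePoint.infty := τ.symm_apply_eq.mpr hτinf.symm
  have hσ : τ * pmulHom p c * τ⁻¹ ∈ stabInfty G := by
    refine mem_stabInfty.mpr ⟨G.mul_mem (G.mul_mem hτG ?_) (G.inv_mem hτG), ?_⟩
    · exact (pmulHom_mem_iff hp2 htrans hcard htransl c).mpr hc
    · simp [hτinv0, hτ0]
  obtain ⟨d, c', hc', hσeq⟩ :=
    exists_eq_ptrans_mul_pmulHom_of_mem_stabInfty hp2 htrans hcard htransl hσ
  have hd : d = 0 := by
    simpa [hτinvinf, hτinf, eq_comm] using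
      congrArg (fun g : Perm _ => g (OnePoint.some 0)) hσeq
  have hconj : τ (pmulHom p c x) = pmulHom p c' (τ x) := by
    simpa [hd] using congrArg (fun g : Perm _ => g (τ x)) hσeq
  rw [hconj, qchar_pmulHom, (quadraticChar_one_iff_isSquare c'.ne_zero).mpr hc', one_mul]

lemma qchar_apply_eq_qchar_apply_one_mul (x : OnePoint (ZMod p)) :
    qchar p (τ x) = qchar p (τ (OnePoint.some 1)) * qchar p x := by
  obtain ⟨u, hu0, hu⟩ := exists_apply_coe_eq_coe_ne_zero hτ0 hτinf one_ne_zero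
  obtain ⟨n, hn⟩ := FiniteField.exists_nonsquare (F := ZMod p) (by rwa [ZMod.ringChar_zmod_n])
  have hn0 : n ≠ 0 := by rintro rfl; exact hn IsSquare.zero
  -- `z₀ := τ⁻¹ (u n)` is where `z ↦ χ (τ z)` takes the value opposite to its value at `1`
  obtain ⟨z₀, hz₀, hτz₀⟩ := exists_apply_coe_eq_coe_ne_zero (τ := τ⁻¹)
    (Perm.inv_eq_iff_eq.mpr hτinf.symm) (Perm.inv_eq_iff_eq.mpr hτ0.symm) (mul_ne_zero hu0 hn0)
  cases x with
  | infty => simp [hτinf]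
  | coe z =>
    by_cases hz : z = 0
    · simp [hz, hτ0]
    refine apply_eq_mul_quadraticChar_of_invariant (ψ := fun z => qchar p (τ (OnePoint.some z)))
      (fun c z hc hcsq => ?_) ?_ hz₀ ?_ hz
    · simpa using qchar_apply_pmulHom_of_isSquare hp2 htrans hcard htransl hτG hτ0 hτinf
        (c := Units.mk0 c hc) hcsq (OnePoint.some z)
    · simpa [hu] using (quadraticChar_eq_zero_iff (F := ZMod p)).not.mpr hu0
    · simp [← Perm.inv_eq_iff_eq.mp hτz₀, hu, map_mul,
        quadraticChar_neg_one_iff_not_isSquare.mpr hn]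

lemma qchar_apply_one : qchar p (τ (OnePoint.some 1)) = quadraticChar (ZMod p) (-1) := by
  obtain ⟨u, hu0, hu⟩ := exists_apply_coe_eq_coe_ne_zero hτ0 hτinf one_ne_zero
  have hτinvinf : τ.symm (OnePoint.some 0) = OnePoint.infty := τ.symm_apply_eq.mpr hτinf.symm
  have hmem : τ⁻¹ * ptrans p (-u) * τ * ptrans p 1 * τ ∈ stabInfty G := by
    refine mem_stabInfty.mpr ⟨?_, by simp [hτinf, hu, hτinvinf]⟩
    exact G.mul_mem (G.mul_mem (G.mul_mem (G.mul_mem (G.inv_mem hτG) (htransl _)) hτG)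
      (htransl 1)) hτG
  obtain ⟨d, c, hc, hheq⟩ :=
    exists_eq_ptrans_mul_pmulHom_of_mem_stabInfty hp2 htrans hcard htransl hmem
  have key : ∀ z : ZMod p,
      τ (OnePoint.some (c * z + d)) = ptrans p (-u) (τ (ptrans p 1 (τ (OnePoint.some z)))) := by
    intro z
    simpa [Perm.mul_apply, add_comm, eq_comm] using
      congrArg (fun g : Perm _ => τ (g (OnePoint.some z))) hheq
  have hd : τ (OnePoint.some d) = OnePoint.some (-u) := by simpa [hτ0, hτinf] using key 0
  obtain ⟨z₁, hcz₁⟩ : ∃ z₁, (c : ZMod p) * z₁ + d = 0 :=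
    ⟨-(d * (c : ZMod p)⁻¹), by field_simp [c.ne_zero]; ring⟩
  have hz₁ : τ (OnePoint.some z₁) = OnePoint.some (-1) := by
    have h1 : τ (ptrans p 1 (τ (OnePoint.some z₁))) = τ (OnePoint.some 0) :=
      (ptrans p (-u)).injective (by rw [← key, hcz₁, hτ0, ptrans_infty])
    rw [← (ptrans p 1).injective.eq_iff, τ.injective h1]
    simp
  have hχz₁ :
      quadraticChar (ZMod p) z₁ = quadraticChar (ZMod p) (-1) * quadraticChar (ZMod p) d := by
    rw [← map_mul, neg_one_mul, ← eq_neg_of_add_eq_zero_left hcz₁, map_mul,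
      (quadraticChar_one_iff_isSquare c.ne_zero).mpr hc, one_mul]
  have hsq := quadraticChar_sq_one (F := ZMod p) (neg_ne_zero.mpr one_ne_zero)
  have hχ := qchar_apply_eq_qchar_apply_one_mul hp2 htrans hcard htransl hτG hτ0 hτinf
  have e1 := hχ (OnePoint.some d)
  have e2 := hχ (OnePoint.some z₁)
  rw [hd, hu, neg_eq_neg_one_mul] at e1
  rw [hz₁, hu] at e2
  simp only [qchar_some, map_mul, hχz₁] at e1 e2
  rw [hu, qchar_some]
  linear_combination quadraticChar (ZMod p) (-1) * e1 - e2 - quadraticChar (ZMod p) u * hsq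

lemma qchar_apply (x : OnePoint (ZMod p)) :
    qchar p (τ x) = quadraticChar (ZMod p) (-1) * qchar p x := by
  rw [qchar_apply_eq_qchar_apply_one_mul hp2 htrans hcard htransl hτG hτ0 hτinf,
    qchar_apply_one hp2 htrans hcard htransl hτG hτ0 hτinf]

end Swap

theorem Kbar_and_squares
    (p : ℕ) [Fact p.Prime] (hp2 : p ≠ 2)
    (G : Subgroup (Equiv.Perm (OnePoint (ZMod p))))
    (htrans : ∀ x y : OnePoint (ZMod p), ∃ g ∈ G, g x = y)
    (hcard : Nat.card G = (p ^ 3 - p) / 2)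
    (htransl : ∀ a : ZMod p, ptrans p a ∈ G)
    (τ : Equiv.Perm (OnePoint (ZMod p))) (hτG : τ ∈ G)
    (hτ0 : τ (OnePoint.some (0 : ZMod p)) = OnePoint.infty)
    (hτinf : τ OnePoint.infty = OnePoint.some (0 : ZMod p)) :
    (p % 4 = 1 →
      (-1 : ZMod p) ∈ Rset p ∧
      τ '' ((fun z : ZMod p => OnePoint.some z) '' Rset p)
        = (fun z : ZMod p => OnePoint.some z) '' Rset p ∧
      τ '' ((fun z : ZMod p => OnePoint.some z) '' Nset p)
        = (fun z : ZMod p => OnePoint.some z) '' Nset p) ∧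
    (p % 4 = 3 →
      (-1 : ZMod p) ∈ Nset p ∧
      τ '' ((fun z : ZMod p => OnePoint.some z) '' Rset p)
        = (fun z : ZMod p => OnePoint.some z) '' Nset p ∧
      τ '' ((fun z : ZMod p => OnePoint.some z) '' Nset p)
        = (fun z : ZMod p => OnePoint.some z) '' Rset p) := by
  have hτinv := qchar_apply hp2 htrans hcard htransl (G.inv_mem hτG)
    (Perm.inv_eq_iff_eq.mpr hτinf.symm) (Perm.inv_eq_iff_eq.mpr hτ0.symm)
  have hneg1 : (-1 : ZMod p) ≠ 0 := neg_ne_zero.mpr one_ne_zero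
  have hε : quadraticChar (ZMod p) (-1) * quadraticChar (ZMod p) (-1) = 1 := by
    rw [← sq, quadraticChar_sq_one hneg1]
  simp only [image_some_Rset, image_some_Nset, image_setOf_qchar_eq hε hτinv]
  refine ⟨fun hp4 => ?_, fun hp4 => ?_⟩
  · have hsq : IsSquare (-1 : ZMod p) := ZMod.exists_sq_eq_neg_one_iff.mpr (by omega)
    rw [(quadraticChar_one_iff_isSquare hneg1).mpr hsq]
    exact ⟨⟨hneg1, hsq⟩, by norm_num, by norm_num⟩
  · have hnsq : ¬IsSquare (-1 : ZMod p) := fun h => ZMod.exists_sq_eq_neg_one_iff.mp h hp4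
    rw [quadraticChar_neg_one_iff_not_isSquare.mpr hnsq]
    exact ⟨⟨hneg1, hnsq⟩, by norm_num, by norm_num⟩
end

section
/- Assume p ≡ 1 (mod 4). Let X be the set of pairs (τ, O) where τ ∈ G and O is an orbit of τ on ℤ/p ∪ {∞} of size exactly 2. Then |X| = ((p² + p)/2) · ((p − 1)/2). -/
/-! Transitivity together with the translations, which fix `∞` and act transitively on `ℤ/p`,
makes `G` doubly transitive on the `p + 1` points. An orbit of size two of `τ` is a pair `{x, y}`
interchanged by `τ`, and for fixed `x ≠ y` the elements of `G` interchanging them form a coset of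
the pointwise stabiliser of `(x, y)`, nonempty by double transitivity. By orbit–stabiliser each
coset has `|G| / ((p + 1) p) = (p - 1) / 2` elements, and there are `(p + 1).choose 2` pairs. -/

open MulAction Function
open scoped Pointwise OnePoint

namespace Equiv.Perm

variable {α : Type*}

theorem ncard_orbit_zpowers_eq_two_iff [Finite α] (τ : Perm α) (x : α) :
    (orbit (Subgroup.zpowers τ) x).ncard = 2 ↔ τ x ≠ x ∧ τ (τ x) = x := by
  have := Fintype.ofFinite (orbit (Subgroup.zpowers τ) x)
  rw [← Nat.card_coe_set_eq, Nat.card_eq_fintype_card, ← minimalPeriod_eq_card,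
    minimalPeriod_eq_prime_iff, and_comm]
  simp [IsPeriodicPt, IsFixedPt, Perm.smul_def]

theorem orbit_zpowers_eq_pair (τ : Perm α) {x : α} (h : τ (τ x) = x) :
    orbit (Subgroup.zpowers τ) x = {x, τ x} := by
  have hτ : τ ∈ stabilizer (Perm α) ({x, τ x} : Set α) := by
    rw [mem_stabilizer_iff, Set.smul_set_insert, Set.smul_set_singleton, Perm.smul_def,
      Perm.smul_def, h, Set.pair_comm]
  refine subset_antisymm ?_ (Set.pair_subset (mem_orbit_self x) ?_)
  · rintro _ ⟨⟨g, hg⟩, rfl⟩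
    rw [← (Subgroup.zpowers_le.mpr hτ hg : g • ({x, τ x} : Set α) = _)]
    exact Set.smul_mem_smul_set (Set.mem_insert x _)
  · exact ⟨⟨τ, Subgroup.mem_zpowers τ⟩, rfl⟩

theorem exists_orbit_zpowers_eq_pair_iff [Finite α] {τ : Perm α} {x y : α} (hxy : x ≠ y) :
    (∃ z, {x, y} = orbit (Subgroup.zpowers τ) z) ↔ τ x = y ∧ τ y = x := by
  constructor
  · rintro ⟨z, hz⟩
    obtain ⟨-, hz2⟩ := (ncard_orbit_zpowers_eq_two_iff τ z).mp (hz ▸ Set.ncard_pair hxy)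
    rw [orbit_zpowers_eq_pair τ hz2, Set.pair_eq_pair_iff] at hz
    rcases hz with ⟨rfl, rfl⟩ | ⟨rfl, rfl⟩
    exacts [⟨rfl, hz2⟩, ⟨hz2, rfl⟩]
  · rintro ⟨hx, hy⟩
    exact ⟨x, by rw [orbit_zpowers_eq_pair τ (by rw [hx, hy]), hx]⟩

end Equiv.Perm

theorem Set.ncard_eq_mul_of_card_fiber {A B : Type*} [Finite A] [Finite B] (S : Set (A × B))
    (T : Set B) (k : ℕ) (hT : ∀ b ∈ T, Nat.card {a // (a, b) ∈ S} = k)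
    (hTc : ∀ b ∉ T, ∀ a, (a, b) ∉ S) :
    S.ncard = T.ncard * k := by
  classical
  have := Fintype.ofFinite B
  calc S.ncard
      = Nat.card (Σ b, {a // (a, b) ∈ S}) :=
        (Nat.card_coe_set_eq S).symm.trans <| Nat.card_congr
          (((Equiv.prodComm A B).subtypeEquiv fun _ => Iff.rfl).trans
            (Equiv.subtypeProdEquivSigmaSubtype fun b a => (a, b) ∈ S))
    _ = ∑ b, if b ∈ T then k else 0 := by
        rw [Nat.card_sigma]
        refine Finset.sum_congr rfl fun b _ => ?_
        split_ifs with hb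
        · exact hT b hb
        · have : IsEmpty {a // (a, b) ∈ S} := ⟨fun a => hTc b hb a.1 a.2⟩
          exact Nat.card_of_isEmpty
    _ = T.ncard * k := by
        simp [Finset.sum_ite, Set.ncard_eq_toFinset_card']

theorem Set.ncard_setOf_ncard_eq (α : Type*) [Finite α] (k : ℕ) :
    {s : Set α | s.ncard = k}.ncard = (Nat.card α).choose k := by
  simpa using Set.ncard_powerset_ncard (Set.finite_univ (α := α)) k

theorem MulAction.card_smul_eq_eq_div {G X : Type*} [Group G] [MulAction G X] [Finite G]
    [Finite X] [IsPretransitive G X] (a b : X) :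
    Nat.card {g : G // g • a = b} = Nat.card G / Nat.card X := by
  obtain ⟨σ, rfl⟩ := exists_smul_eq G a b
  have e : {g : G // g • a = σ • a} ≃ stabilizer G a :=
    { toFun g := ⟨σ⁻¹ * g, by rw [mem_stabilizer_iff, mul_smul, g.2, inv_smul_smul]⟩
      invFun h := ⟨σ * h, by rw [mul_smul, (mem_stabilizer_iff.mp h.2 : (h : G) • a = a)]⟩
      left_inv g := by simp
      right_inv h := by simp }
  rw [Nat.card_congr e, ← (stabilizer G a).index_mul_card, index_stabilizer_of_transitive]
  have : Nonempty X := ⟨a⟩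
  exact (Nat.mul_div_cancel_left _ Nat.card_pos).symm

theorem Nat.card_fin_two_embedding (α : Type*) [Finite α] :
    Nat.card (Fin 2 ↪ α) = Nat.card α * (Nat.card α - 1) := by
  classical
  have := Fintype.ofFinite α
  rw [Nat.card_eq_fintype_card, Fintype.card_embedding_eq, Fintype.card_fin,
    Nat.card_eq_fintype_card, Nat.descFactorial_succ, Nat.descFactorial_one, mul_comm]

section TwoTransitive

variable {α : Type*} [Finite α] (G : Subgroup (Equiv.Perm α)) [IsMultiplyPretransitive G α 2]

theorem Subgroup.card_swapping_eq_div {x y : α} (hxy : x ≠ y) :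
    Nat.card {τ : Equiv.Perm α // τ ∈ G ∧ τ x = y ∧ τ y = x}
      = Nat.card G / (Nat.card α * (Nat.card α - 1)) := by
  have e : {τ : Equiv.Perm α // τ ∈ G ∧ τ x = y ∧ τ y = x}
      ≃ {g : G // g • Embedding.embFinTwo hxy = Embedding.embFinTwo hxy.symm} :=
    { toFun τ := ⟨⟨τ, τ.2.1⟩, by
        ext i
        fin_cases i
        exacts [τ.2.2.1, τ.2.2.2]⟩
      invFun g := ⟨g.1, g.1.2, congrArg (· 0) g.2, congrArg (· 1) g.2⟩
      left_inv _ := rfl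
      right_inv _ := rfl }
  -- `IsMultiplyPretransitive` refers to this action, not to the one through `Perm α`
  let : MulAction G (Fin 2 ↪ α) := Embedding.instMulAction
  rw [Nat.card_congr e, card_smul_eq_eq_div, Nat.card_fin_two_embedding]

theorem Subgroup.ncard_pairs_with_two_orbit :
    {q : Equiv.Perm α × Set α |
        q.1 ∈ G ∧ (∃ x, q.2 = orbit (Subgroup.zpowers q.1) x) ∧ q.2.ncard = 2}.ncard
      = (Nat.card α).choose 2 * (Nat.card G / (Nat.card α * (Nat.card α - 1))) := by
  rw [← Set.ncard_setOf_ncard_eq]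
  apply Set.ncard_eq_mul_of_card_fiber
  · intro O hO
    obtain ⟨x, y, hxy, rfl⟩ := Set.ncard_eq_two.mp hO
    rw [← G.card_swapping_eq_div hxy]
    refine Nat.card_congr (Equiv.subtypeEquivRight fun τ => ?_)
    rw [Set.mem_ofPred_eq] at hO
    rw [Set.mem_ofPred_eq, and_iff_left hO, Equiv.Perm.exists_orbit_zpowers_eq_pair_iff hxy]
  · exact fun O hO τ h => hO h.2.2

end TwoTransitive

theorem exists_mem_apply_eq_infty_apply_eq_zero {p : ℕ}
    {G : Subgroup (Equiv.Perm (OnePoint (ZMod p)))}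
    (htrans : ∀ x y : OnePoint (ZMod p), ∃ g ∈ G, g x = y)
    (htransl : ∀ a : ZMod p, ptrans p a ∈ G) {x y : OnePoint (ZMod p)} (hxy : x ≠ y) :
    ∃ g ∈ G, g x = ∞ ∧ g y = (0 : ZMod p) := by
  obtain ⟨g, hg, hgx⟩ := htrans x ∞
  obtain ⟨u, hu⟩ := OnePoint.ne_infty_iff_exists.mp
    fun h : g y = ∞ => hxy (g.injective (hgx.trans h.symm))
  refine ⟨ptrans p (-u) * g, mul_mem (htransl _) hg, ?_, ?_⟩
  · rw [Equiv.Perm.mul_apply, hgx]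
    rfl
  · rw [Equiv.Perm.mul_apply, ← hu]
    exact congrArg OnePoint.some (add_neg_cancel u)

theorem isMultiplyPretransitive_two_of_ptrans_mem {p : ℕ}
    {G : Subgroup (Equiv.Perm (OnePoint (ZMod p)))}
    (htrans : ∀ x y : OnePoint (ZMod p), ∃ g ∈ G, g x = y)
    (htransl : ∀ a : ZMod p, ptrans p a ∈ G) :
    IsMultiplyPretransitive G (OnePoint (ZMod p)) 2 := by
  rw [is_two_pretransitive_iff]
  intro a b c d hab hcd
  obtain ⟨g, hg, hga, hgb⟩ := exists_mem_apply_eq_infty_apply_eq_zero htrans htransl hab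
  obtain ⟨h, hh, hhc, hhd⟩ := exists_mem_apply_eq_infty_apply_eq_zero htrans htransl hcd
  refine ⟨⟨h⁻¹ * g, mul_mem (inv_mem hh) hg⟩, ?_, ?_⟩
  · exact Equiv.Perm.inv_eq_iff_eq.mpr (hga.trans hhc.symm)
  · exact Equiv.Perm.inv_eq_iff_eq.mpr (hgb.trans hhd.symm)

theorem Nat.cube_sub_self_div_two_div_mul_succ (p : ℕ) :
    (p ^ 3 - p) / 2 / ((p + 1) * p) = (p - 1) / 2 := by
  rcases p with _ | q
  · rfl
  have hcube : (q + 1) ^ 3 - (q + 1) = (q + 1 + 1) * (q + 1) * q :=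
    Nat.sub_eq_of_eq_add (by ring)
  rw [hcube, Nat.div_div_eq_div_mul, mul_comm 2, Nat.mul_div_mul_left _ _ (by positivity),
    Nat.add_sub_cancel]

theorem card_pairs_with_two_orbit_general
    (p : ℕ) [Fact p.Prime]
    (G : Subgroup (Equiv.Perm (OnePoint (ZMod p))))
    (htrans : ∀ x y : OnePoint (ZMod p), ∃ g ∈ G, g x = y)
    (hcard : Nat.card G = (p ^ 3 - p) / 2)
    (htransl : ∀ a : ZMod p, ptrans p a ∈ G) :
    Set.ncard {q : Equiv.Perm (OnePoint (ZMod p)) × Set (OnePoint (ZMod p)) |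
        q.1 ∈ G ∧ (∃ x, q.2 = MulAction.orbit (Subgroup.zpowers q.1) x) ∧ q.2.ncard = 2}
      = ((p ^ 2 + p) / 2) * ((p - 1) / 2) := by
  have := isMultiplyPretransitive_two_of_ptrans_mem htrans htransl
  have hcardX : Nat.card (OnePoint (ZMod p)) = p + 1 := by
    rw [show Nat.card (OnePoint (ZMod p)) = Nat.card (Option (ZMod p)) from rfl,
      Finite.card_option, Nat.card_zmod]
  rw [G.ncard_pairs_with_two_orbit, hcard, hcardX, Nat.add_sub_cancel,
    Nat.cube_sub_self_div_two_div_mul_succ, Nat.choose_two_right, Nat.add_sub_cancel]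
  ring_nf

theorem card_pairs_with_two_orbit
    (p : ℕ) [Fact p.Prime] (hp2 : p ≠ 2) (hp1 : p % 4 = 1)
    (G : Subgroup (Equiv.Perm (OnePoint (ZMod p))))
    (htrans : ∀ x y : OnePoint (ZMod p), ∃ g ∈ G, g x = y)
    (hcard : Nat.card G = (p ^ 3 - p) / 2)
    (htransl : ∀ a : ZMod p, ptrans p a ∈ G) :
    Set.ncard {q : Equiv.Perm (OnePoint (ZMod p)) × Set (OnePoint (ZMod p)) |
        q.1 ∈ G ∧ (∃ x, q.2 = MulAction.orbit (Subgroup.zpowers q.1) x) ∧ q.2.ncard = 2}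
      = ((p ^ 2 + p) / 2) * ((p - 1) / 2) :=
  card_pairs_with_two_orbit_general p G htrans hcard htransl
end
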